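/- arXiv:2109.11811 — 5 statements merged into one kernel-verified Lean document; each statement's English description precedes it below -/
import Mathlib

section
/- For every integer k ≥ 1, (2k−1)!!/(2^k · k!) ≤ 1/√(2k). -/
lemma aux_stmt2 (k : ℕ) :
    (Nat.doubleFactorial (2*k+1) : ℝ) / (2^(k+1) * (Nat.factorial (k+1) : ℝ)) ≤
      1 / Real.sqrt (2*(k:ℝ)+3) := by
  induction k with
  | zero =>
      have h3 : Real.sqrt (2*(0:ℝ)+3) ≤ 2 := by
        rw [show (2:ℝ) = Real.sqrt (2^2) by rw [Real.sqrt_sq]; norm_num]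
        exact Real.sqrt_le_sqrt (by norm_num)
      have h3p : 0 < Real.sqrt (2*(0:ℝ)+3) := Real.sqrt_pos.mpr (by norm_num)
      have e : (Nat.doubleFactorial (2*0+1) : ℝ) / (2^(0+1) * (Nat.factorial (0+1):ℝ)) = 1/2 := by
        norm_num [Nat.doubleFactorial, Nat.factorial]
      rw [e]
      push_cast
      rw [div_le_div_iff₀ (by norm_num) h3p]
      nlinarith
  | succ n ih =>
      have h1 : 2*(n+1)+1 = (2*n+1)+2 := by ring
      rw [h1, Nat.doubleFactorial_add_two]
      set a := Real.sqrt (2*(n:ℝ)+3) with ha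
      set b := Real.sqrt (2*((n:ℝ)+1)+3) with hb
      have ha2 : a^2 = 2*(n:ℝ)+3 := Real.sq_sqrt (by positivity)
      have hb2 : b^2 = 2*(n:ℝ)+5 := by
        rw [hb]; rw [Real.sq_sqrt (by positivity)]; ring
      have hapos : 0 < a := Real.sqrt_pos.mpr (by positivity)
      have hbpos : 0 < b := Real.sqrt_pos.mpr (by positivity)
      have hab : a*b ≤ 2*(n:ℝ)+4 := by nlinarith [sq_nonneg (a-b)]
      have hF : (0:ℝ) < 2^(n+1) * (Nat.factorial (n+1) : ℝ) := by positivity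
      have key : ((2*n+1)+2 : ℝ) / (2^(n+1+1) * (Nat.factorial (n+1+1) : ℝ))
          = (2*(n:ℝ)+3)/(2*(n:ℝ)+4) * (1 / (2^(n+1) * (Nat.factorial (n+1) : ℝ))) := by
        rw [Nat.factorial_succ (n+1)]
        push_cast
        field_simp
        ring
      calc ((((2*n+1)+2) * Nat.doubleFactorial (2*n+1) : ℕ) : ℝ) / (2^(n+1+1) * (Nat.factorial (n+1+1) : ℝ))
          = (2*(n:ℝ)+3)/(2*(n:ℝ)+4) * ((Nat.doubleFactorial (2*n+1) : ℝ) / (2^(n+1) * (Nat.factorial (n+1) : ℝ))) := by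
            rw [Nat.factorial_succ (n+1)]
            push_cast
            field_simp
            ring
        _ ≤ (2*(n:ℝ)+3)/(2*(n:ℝ)+4) * (1 / a) := by
            gcongr
        _ ≤ 1 / b := by
            rw [div_mul_div_comm, mul_one, div_le_div_iff₀ (by positivity) hbpos]
            nlinarith [mul_le_mul_of_nonneg_left hab (le_of_lt hapos)]
        _ = 1 / Real.sqrt (2*((n+1:ℕ):ℝ)+3) := by rw [hb]; push_cast; ring_nf

theorem stmt_2 (k : ℕ) (hk : 1 ≤ k) :
    (Nat.doubleFactorial (2*k-1) : ℝ) / (2^k * (Nat.factorial k : ℝ)) ≤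
      1 / Real.sqrt (2*(k:ℝ)) := by
  obtain ⟨m, rfl⟩ := Nat.exists_eq_add_of_le hk
  have h1 : 2*(1+m)-1 = 2*m+1 := by omega
  rw [h1]
  calc (Nat.doubleFactorial (2*m+1) : ℝ) / (2^(1+m) * (Nat.factorial (1+m) : ℝ))
      = (Nat.doubleFactorial (2*m+1) : ℝ) / (2^(m+1) * (Nat.factorial (m+1) : ℝ)) := by
        rw [Nat.add_comm 1 m]
    _ ≤ 1 / Real.sqrt (2*(m:ℝ)+3) := aux_stmt2 m
    _ ≤ 1 / Real.sqrt (2*(((1+m:ℕ)):ℝ)) := by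
        have hle : Real.sqrt (2*(((1+m:ℕ)):ℝ)) ≤ Real.sqrt (2*(m:ℝ)+3) :=
          Real.sqrt_le_sqrt (by push_cast; linarith)
        have hp : 0 < Real.sqrt (2*(((1+m:ℕ)):ℝ)) :=
          Real.sqrt_pos.mpr (by push_cast; positivity)
        exact one_div_le_one_div_of_le hp hle
end

section
/- For every real σ with |σ| ≤ 1, the series Σ_{k≥1} ((2k−1)!!(2k+7)/(2^{k+4}(k+2)!)) σ^{2k+2} converges and is at most (3/8)σ². -/
noncomputable def Baux (k : ℕ) : ℝ :=
  (Nat.doubleFactorial (2*k+1) : ℝ) * (2*(k:ℝ)+5) / (2^(k+4) * (Nat.factorial (k+2) : ℝ))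

lemma Baux_nonneg (k : ℕ) : 0 ≤ Baux k := by
  unfold Baux
  positivity

lemma key (k : ℕ) :
    ((Nat.doubleFactorial (2*(k+1)-1) : ℝ) * (2*((k:ℝ)+1)+7)) /
        (2^((k+1)+4) * (Nat.factorial ((k+1)+2) : ℝ)) = Baux k - Baux (k+1) := by
  have h1 : 2*(k+1)-1 = 2*k+1 := by omega
  have h2 : 2*(k+1)+1 = (2*k+1)+2 := by omega
  have h3 : (k+1)+2 = (k+2)+1 := by omega
  rw [h1]
  unfold Baux
  rw [h2, Nat.doubleFactorial_add_two, h3, Nat.factorial_succ]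
  push_cast
  have hfac : (0:ℝ) < (Nat.factorial (k+2) : ℝ) := by positivity
  have hdf : (0:ℝ) ≤ (Nat.doubleFactorial (2*k+1) : ℝ) := by positivity
  field_simp
  ring

theorem stmt_3 (σ : ℝ) (hσ : |σ| ≤ 1) :
    Summable (fun k : ℕ =>
      ((Nat.doubleFactorial (2*(k+1)-1) : ℝ) * (2*((k:ℝ)+1)+7)) /
        (2^((k+1)+4) * (Nat.factorial ((k+1)+2) : ℝ)) * σ^(2*(k+1)+2)) ∧
    (∑' k : ℕ,
      ((Nat.doubleFactorial (2*(k+1)-1) : ℝ) * (2*((k:ℝ)+1)+7)) /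
        (2^((k+1)+4) * (Nat.factorial ((k+1)+2) : ℝ)) * σ^(2*(k+1)+2)) ≤ 3/8 * σ^2 := by
  set f : ℕ → ℝ := fun k =>
      ((Nat.doubleFactorial (2*(k+1)-1) : ℝ) * (2*((k:ℝ)+1)+7)) /
        (2^((k+1)+4) * (Nat.factorial ((k+1)+2) : ℝ)) * σ^(2*(k+1)+2) with hf
  have hσ2 : σ^2 ≤ 1 := by
    have := sq_abs σ
    nlinarith [abs_nonneg σ]
  have hσ2' : (0:ℝ) ≤ σ^2 := sq_nonneg σ
  have hpow : ∀ k : ℕ, σ^(2*(k+1)+2) = (σ^2)^(k+1) * σ^2 := by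
    intro k
    rw [← pow_mul, ← pow_add]
  have hBantitone : ∀ k, Baux (k+1) ≤ Baux k := by
    intro k
    have := key k
    have hpos : (0:ℝ) ≤ ((Nat.doubleFactorial (2*(k+1)-1) : ℝ) * (2*((k:ℝ)+1)+7)) /
        (2^((k+1)+4) * (Nat.factorial ((k+1)+2) : ℝ)) := by positivity
    linarith
  have hfnonneg : ∀ k, 0 ≤ f k := by
    intro k
    rw [hf]
    simp only
    rw [hpow k]
    positivity
  have hfle : ∀ k, f k ≤ (Baux k - Baux (k+1)) * σ^2 := by
    intro k
    rw [hf]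
    simp only
    rw [hpow k, key k]
    have h1 : 0 ≤ Baux k - Baux (k+1) := by linarith [hBantitone k]
    have h2 : (σ^2)^(k+1) ≤ 1 := pow_le_one₀ hσ2' hσ2
    exact mul_le_mul_of_nonneg_left (mul_le_of_le_one_left hσ2' h2) h1
  have hB0 : Baux 0 = 5/32 := by
    unfold Baux
    norm_num [Nat.doubleFactorial, Nat.factorial]
  have hsum : ∀ n : ℕ, ∑ k ∈ Finset.range n, f k ≤ 3/8 * σ^2 := by
    intro n
    calc ∑ k ∈ Finset.range n, f k
        ≤ ∑ k ∈ Finset.range n, (Baux k - Baux (k+1)) * σ^2 :=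
          Finset.sum_le_sum (fun k _ => hfle k)
      _ = (∑ k ∈ Finset.range n, (Baux k - Baux (k+1))) * σ^2 := by
          rw [Finset.sum_mul]
      _ = (Baux 0 - Baux n) * σ^2 := by rw [Finset.sum_range_sub' Baux n]
      _ ≤ Baux 0 * σ^2 := by nlinarith [Baux_nonneg n]
      _ ≤ 3/8 * σ^2 := by rw [hB0]; nlinarith
  have hsummable := summable_of_sum_range_le hfnonneg hsum
  exact ⟨hsummable, Summable.tsum_le_of_sum_range_le hsummable hsum⟩
end

section
/- Define f(λ,σ) := (1−σ²)² (μ₊² + μ₋²)/(μ₊ μ₋)^{5/2}, where μ₊ := 1+λ²+2λσ and μ₋ := 1+λ²−2λσ. For any fixed λ with 0 < λ ≤ √((5−√21)/2) and σ ∈ (0,1) with μ₊, μ₋ > 0, the partial derivative ∂f/∂σ ≤ 0; i.e., f is nonincreasing in σ on [0,1). -/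
/-!
Write `a = 1 + λ²`, `D = μ₊ μ₋ = a² - 4λ²σ²` and `N = μ₊² + μ₋² = 2(a² + 4λ²σ²)`. Differentiating
`(1 - σ²)² N / D^{5/2}` gives `D^{-7/2}` times `σ (1 - σ²) Q(σ²)` with
`Q(x) = -8a⁴ + 56λ²a²(1 - x) + 96λ⁴x + 32λ⁴x²`. The bound on `λ` says exactly `7λ² ≤ a²`
(`λ²` lies below the smaller root `(5 - √21)/2` of `y² - 5y + 1`), and then
`Q(x) ≤ x (128λ⁴ - 8a⁴) ≤ 0` on `[0, 1]`.
-/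

open Real

theorem HasDerivAt.mul_div_rpow_const {G N D : ℝ → ℝ} {G' N' D' x : ℝ}
    (hG : HasDerivAt G G' x) (hN : HasDerivAt N N' x) (hD : HasDerivAt D D' x)
    (hDx : 0 < D x) (p : ℝ) :
    HasDerivAt (fun s => G s * (N s / D s ^ p))
      ((G' * N x * D x + G x * N' * D x - p * G x * N x * D') / D x ^ (p + 1)) x := by
  have hDp : D x ^ p ≠ 0 := (rpow_pos_of_pos hDx p).ne'
  refine (hG.mul (hN.div (hD.rpow_const (p := p) (Or.inl hDx.ne')) hDp)).congr_deriv ?_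
  rw [Pi.div_apply, rpow_add_one hDx.ne', rpow_sub_one hDx.ne']
  field_simp
  ring

theorem seven_mul_sq_le_one_add_sq_sq {l : ℝ} (hl : 0 ≤ l)
    (hl2 : l ≤ √((5 - √21) / 2)) : 7 * l ^ 2 ≤ (1 + l ^ 2) ^ 2 := by
  have h21 : √21 ^ 2 = 21 := sq_sqrt (by norm_num)
  have hroot : 0 ≤ (5 - √21) / 2 := by nlinarith [sqrt_nonneg 21]
  have hsq : l ^ 2 ≤ (5 - √21) / 2 := by
    have := pow_le_pow_left₀ hl hl2 2
    rwa [sq_sqrt hroot] at this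
  have hfactor : (1 + l ^ 2) ^ 2 - 7 * l ^ 2
      = ((5 - √21) / 2 - l ^ 2) * ((5 + √21) / 2 - l ^ 2) := by
    linear_combination (1 / 4 : ℝ) * h21
  nlinarith [sqrt_nonneg 21]

theorem quartic_nonpos_of_seven_mul_sq_le {a l x : ℝ} (h7 : 7 * l ^ 2 ≤ a ^ 2)
    (hx0 : 0 ≤ x) (hx1 : x ≤ 1) :
    -8 * a ^ 4 + 56 * l ^ 2 * a ^ 2 * (1 - x) + 96 * l ^ 4 * x + 32 * l ^ 4 * x ^ 2 ≤ 0 := by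
  have hmid : 56 * l ^ 2 * a ^ 2 * (1 - x) ≤ 8 * a ^ 4 * (1 - x) := by
    nlinarith [mul_nonneg (sq_nonneg a) (sub_nonneg.2 hx1)]
  have hquart : 16 * l ^ 4 ≤ a ^ 4 := by nlinarith [sq_nonneg l]
  nlinarith [mul_nonneg (mul_nonneg hx0 (sub_nonneg.2 hx1)) (pow_nonneg (sq_nonneg l) 2),
    mul_nonneg hx0 (sub_nonneg.2 hquart)]

theorem stmt_7 (lam σ : ℝ) (hlam : 0 < lam)
    (hlam2 : lam ≤ Real.sqrt ((5 - Real.sqrt 21)/2))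
    (hσ : σ ∈ Set.Ioo (0:ℝ) 1)
    (hp : 0 < 1 + lam^2 + 2*lam*σ) (hm : 0 < 1 + lam^2 - 2*lam*σ) :
    deriv (fun s : ℝ =>
        (1 - s^2)^2 * (((1+lam^2+2*lam*s)^2 + (1+lam^2-2*lam*s)^2) /
          ((1+lam^2+2*lam*s)*(1+lam^2-2*lam*s)) ^ ((5:ℝ)/2))) σ ≤ 0 := by
  obtain ⟨hσ0, hσ1⟩ := hσ
  have hμp : HasDerivAt (fun s : ℝ => 1 + lam^2 + 2*lam*s) (2*lam) σ := by
    simpa using ((hasDerivAt_id σ).const_mul (2*lam)).const_add (1+lam^2)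
  have hμm : HasDerivAt (fun s : ℝ => 1 + lam^2 - 2*lam*s) (-(2*lam)) σ := by
    simpa using ((hasDerivAt_id σ).const_mul (2*lam)).const_sub (1+lam^2)
  have hG : HasDerivAt (fun s : ℝ => (1 - s^2)^2) (2 * (1 - σ^2) * -(2*σ)) σ := by
    simpa using ((hasDerivAt_pow 2 σ).const_sub 1).fun_pow 2
  rw [(hG.mul_div_rpow_const ((hμp.fun_pow 2).fun_add (hμm.fun_pow 2)) (hμp.fun_mul hμm)
    (mul_pos hp hm) _).deriv]
  refine div_nonpos_of_nonpos_of_nonneg ?_ (rpow_nonneg (mul_pos hp hm).le _)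
  have hQ := quartic_nonpos_of_seven_mul_sq_le (seven_mul_sq_le_one_add_sq_sq hlam.le hlam2)
    (sq_nonneg σ) (by nlinarith : σ^2 ≤ 1)
  have hσ' : 0 ≤ σ * (1 - σ^2) := mul_nonneg hσ0.le (by nlinarith)
  linear_combination mul_nonpos_of_nonneg_of_nonpos hσ' hQ
end

section
/- Let a, z, x ∈ ℂⁿ with a*z ≠ 0. Define T := 2(1 − |a*x|/|a*z|) Re(h* a a* z e^{−iφ}) − (|a*z| − |a*x|)², where z = e^{iφ}(x + h) for some φ ∈ ℝ and h ∈ ℂⁿ. Then |T| ≤ 3|a*h|². -/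
/-!
Write `α = a*x`, `β = a*h`, so that `a*z = e^{iφ}(α + β)` and, with `r = |α + β|`, `s = |α|`,
`b = |β|`, `d = r - s`, the polarisation identity gives `Re(β̄(α + β)) = (r² - s² + b²)/2` and
`T = d² + d(b² - d²)/r`. The triangle inequality gives `|d| ≤ b ≤ r + s`; hence the correction
`d(b² - d²)/r` lies in `[0, b² - d²]` when `d ≥ 0` (as `d ≤ r`) and in `[-2|d|(b + |d|), 0]` when
`d < 0` (as `b - |d| ≤ 2r`), and both cases give `|T| ≤ 3b²`. If `r = 0`, then `s = b` and, with
`s/0 = 0`, `T = -b²`.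
-/

open ComplexConjugate

lemma abs_one_sub_div_mul_sub_sq_le {r s b : ℝ} (hr : 0 ≤ r) (hs : 0 ≤ s)
    (hd : |r - s| ≤ b) (hb : b ≤ r + s) :
    |(1 - s / r) * (r ^ 2 - s ^ 2 + b ^ 2) - (r - s) ^ 2| ≤ 3 * b ^ 2 := by
  rcases hr.eq_or_lt with rfl | hr
  · have hsb : s = b := by rw [zero_sub, abs_neg, abs_of_nonneg hs] at hd; linarith
    subst hsb
    rw [div_zero, sub_zero, zero_sub, neg_sq, one_mul, zero_pow two_ne_zero, zero_sub,
      neg_add_cancel, zero_sub, abs_neg, abs_of_nonneg (sq_nonneg s)]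
    linarith [sq_nonneg s]
  set d := r - s
  have hT : (1 - s / r) * (r ^ 2 - s ^ 2 + b ^ 2) - d ^ 2 = d ^ 2 + d * (b ^ 2 - d ^ 2) / r := by
    field_simp
    ring
  rw [hT, abs_le]
  obtain ⟨hdb₁, hdb₂⟩ := abs_le.mp hd
  have hbd : 0 ≤ b ^ 2 - d ^ 2 := by nlinarith
  rcases le_or_gt 0 d with hd0 | hd0
  · have hdr : d / r ≤ 1 := (div_le_one hr).mpr (by linarith)
    have hcorr : d * (b ^ 2 - d ^ 2) / r ≤ b ^ 2 - d ^ 2 := by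
      rw [mul_div_right_comm]; exact mul_le_of_le_one_left hbd hdr
    have : 0 ≤ d * (b ^ 2 - d ^ 2) / r := by positivity
    constructor <;> nlinarith
  · have hcorr : -(2 * (-d) * (b - d)) ≤ d * (b ^ 2 - d ^ 2) / r := by
      rw [le_div_iff₀ hr]
      have : b + d ≤ 2 * r := by linarith
      nlinarith [mul_le_mul_of_nonneg_left this (by nlinarith : 0 ≤ (-d) * (b - d))]
    have : d * (b ^ 2 - d ^ 2) / r ≤ 0 := div_nonpos_of_nonpos_of_nonneg (by nlinarith) hr.le
    constructor <;> nlinarith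

lemma Complex.re_conj_mul_add (α β : ℂ) :
    (conj β * (α + β)).re = (‖α + β‖ ^ 2 - ‖α‖ ^ 2 + ‖β‖ ^ 2) / 2 := by
  simp only [Complex.sq_norm, Complex.normSq_apply, Complex.mul_re, Complex.add_re,
    Complex.add_im, Complex.conj_re, Complex.conj_im]
  ring

lemma Complex.abs_re_conj_mul_add_sub_sq_le (α β : ℂ) :
    |2 * (1 - ‖α‖ / ‖α + β‖) * (conj β * (α + β)).re - (‖α + β‖ - ‖α‖) ^ 2| ≤ 3 * ‖β‖ ^ 2 := by
  have hd : |‖α + β‖ - ‖α‖| ≤ ‖β‖ := by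
    simpa using abs_norm_sub_norm_le (α + β) α
  have hb : ‖β‖ ≤ ‖α + β‖ + ‖α‖ := by
    simpa using norm_sub_le (α + β) α
  rw [Complex.re_conj_mul_add, mul_assoc, mul_left_comm, mul_div_cancel₀ _ two_ne_zero]
  exact abs_one_sub_div_mul_sub_sq_le (norm_nonneg _) (norm_nonneg _) hd hb

theorem stmt_10_general (n : ℕ) (a z x h : EuclideanSpace ℂ (Fin n)) (φ : ℝ)
    (hz : z = Complex.exp (φ * Complex.I) • (x + h)) :
    |2*(1 - ‖(inner ℂ a x : ℂ)‖/‖(inner ℂ a z : ℂ)‖) *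
        ((inner ℂ h a : ℂ) * (inner ℂ a z : ℂ) * Complex.exp (-(φ * Complex.I))).re
      - (‖(inner ℂ a z : ℂ)‖ - ‖(inner ℂ a x : ℂ)‖)^2|
      ≤ 3 * ‖(inner ℂ a h : ℂ)‖^2 := by
  have hinner : inner ℂ a z = Complex.exp (φ * Complex.I) * (inner ℂ a x + inner ℂ a h) := by
    rw [hz, inner_smul_right, inner_add_right]
  have hnorm : ‖(inner ℂ a z : ℂ)‖ = ‖inner ℂ a x + inner ℂ a h‖ := by
    rw [hinner, norm_mul, Complex.norm_exp_ofReal_mul_I, one_mul]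
  have hprod : inner ℂ h a * inner ℂ a z * Complex.exp (-(φ * Complex.I))
      = conj (inner ℂ a h) * (inner ℂ a x + inner ℂ a h) := by
    rw [hinner, inner_conj_symm, Complex.exp_neg]
    field_simp
  rw [hnorm, hprod]
  exact Complex.abs_re_conj_mul_add_sub_sq_le _ _

theorem stmt_10 (n : ℕ) (a z x h : EuclideanSpace ℂ (Fin n)) (φ : ℝ)
    (hz : z = Complex.exp (φ * Complex.I) • (x + h))
    (hne : (inner ℂ a z : ℂ) ≠ 0) :
    |2*(1 - ‖(inner ℂ a x : ℂ)‖/‖(inner ℂ a z : ℂ)‖) *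
        ((inner ℂ h a : ℂ) * (inner ℂ a z : ℂ) * Complex.exp (-(φ * Complex.I))).re
      - (‖(inner ℂ a z : ℂ)‖ - ‖(inner ℂ a x : ℂ)‖)^2|
      ≤ 3 * ‖(inner ℂ a h : ℂ)‖^2 :=
  stmt_10_general n a z x h φ hz
end

section
/- Suppose the function f(z) = (1/m) Σ_j (|a_j*z| − |a_j*x|)² satisfies the restricted strong convexity condition: D_{z−x e^{iφ(z)}} f(z) ≥ γ‖z − x e^{iφ(z)}‖² + f(z) for all z with dist(z,x) ≤ ε‖x‖, where φ(z) := argmin_φ ‖z − x e^{iφ}‖ and dist(z,x) := min_φ ‖z − x e^{iφ}‖. Let z_{k+1} := z_k − (1 − b_{i_k}/|a_{i_k}* z_k|) a_{i_k} a_{i_k}* z_k with b_j := |a_j* x|, ‖a_j‖ = 1 for all j, and i_k chosen uniformly at random from {1,…,m}. Then for any z_k with dist(z_k, x) ≤ ε‖x‖, E_{i_k}[dist²(z_{k+1}, x)] ≤ (1 − γ) dist²(z_k, x). -/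
/-!
Fix a phase `φ₀` attaining `dist(z, x)` and put `h = z - e^{iφ₀} x`. The Kaczmarz step moves `z`
by `c a` with `|c| ≤ | |a* z| - b |`, so `‖h - c a‖² = ‖h‖² - 2 Re(…) + (|a* z| - b)²`; since
`dist(z⁺, x) ≤ ‖z⁺ - e^{iφ₀} x‖ = ‖h - c a‖`, averaging over the index turns the right-hand side
into `‖h‖² - D_h f(z) + f(z)`, which restricted strong convexity bounds by `(1 - γ) ‖h‖²`.
-/

open scoped InnerProductSpace

section PhaseDist

variable {E : Type*} [NormedAddCommGroup E] [NormedSpace ℂ E]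

/-- The paper's `dist(z, x)`: the distance from `z` to the circle `{e^{iφ} x}`. -/
noncomputable def phaseDist (x z : E) : ℝ :=
  ⨅ φ : ℝ, ‖z - Complex.exp (φ * Complex.I) • x‖

lemma phaseDist_le (x z : E) (φ : ℝ) :
    phaseDist x z ≤ ‖z - Complex.exp (φ * Complex.I) • x‖ :=
  ciInf_le ⟨0, by rintro _ ⟨ψ, rfl⟩; exact norm_nonneg _⟩ φ

lemma phaseDist_nonneg (x z : E) : 0 ≤ phaseDist x z :=
  le_ciInf fun _ => norm_nonneg _

lemma exists_norm_sub_exp_smul_eq_phaseDist (x z : E) :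
    ∃ φ : ℝ, ‖z - Complex.exp (φ * Complex.I) • x‖ = phaseDist x z := by
  set g : ℝ → ℝ := fun φ => ‖z - Complex.exp (φ * Complex.I) • x‖
  have hg : Continuous g := by fun_prop
  have hper : Function.Periodic g (2 * Real.pi) := fun φ => by
    simp only [g, Complex.ofReal_add, Complex.ofReal_mul, Complex.ofReal_ofNat, add_mul,
      Complex.exp_add, Complex.exp_two_pi_mul_I, mul_one]
  exact (hper.compact_of_continuous Real.two_pi_pos.ne' hg).sInf_mem (Set.range_nonempty g)

end PhaseDist

lemma norm_ofReal_one_sub_div_norm_mul_le (u : ℂ) (b : ℝ) :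
    ‖((1 - b / ‖u‖ : ℝ) : ℂ) * u‖ ≤ |‖u‖ - b| := by
  rcases eq_or_ne u 0 with rfl | hu
  · simp
  have hu' : ‖u‖ ≠ 0 := norm_ne_zero_iff.mpr hu
  have hscale : (1 - b / ‖u‖) * ‖u‖ = ‖u‖ - b := by field_simp
  rw [norm_mul, Complex.norm_real, Real.norm_eq_abs, ← hscale, abs_mul, abs_norm]

section Kaczmarz

variable {E : Type*} [NormedAddCommGroup E] [InnerProductSpace ℂ E]

/-- One Kaczmarz step along `a`, for the measured amplitude `b = |⟪a, x⟫|`. -/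
noncomputable def kaczmarzStep (a : E) (b : ℝ) (z : E) : E :=
  z - (((1 - b / ‖⟪a, z⟫_ℂ‖ : ℝ) : ℂ) * ⟪a, z⟫_ℂ) • a

lemma re_inner_smul_ofReal_mul_inner (a z h : E) (t : ℝ) :
    RCLike.re ⟪h, (((t : ℂ) * ⟪a, z⟫_ℂ) • a)⟫_ℂ = t * (⟪a, h⟫_ℂ * ⟪z, a⟫_ℂ).re := by
  rw [inner_smul_right, ← inner_conj_symm h a, ← inner_conj_symm z a, RCLike.re_to_complex,
    mul_assoc, Complex.re_ofReal_mul]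
  congr 1
  rw [← Complex.conj_re, map_mul, Complex.conj_conj, mul_comm]

lemma norm_sub_kaczmarzStep_sq_le (a z y : E) (ha : ‖a‖ = 1) (b : ℝ) :
    ‖kaczmarzStep a b z - y‖ ^ 2 ≤ ‖z - y‖ ^ 2
      - 2 * ((1 - b / ‖⟪a, z⟫_ℂ‖) * (⟪a, z - y⟫_ℂ * ⟪z, a⟫_ℂ).re) + (‖⟪a, z⟫_ℂ‖ - b) ^ 2 := by
  have hstep : kaczmarzStep a b z - y
      = (z - y) - (((1 - b / ‖⟪a, z⟫_ℂ‖ : ℝ) : ℂ) * ⟪a, z⟫_ℂ) • a := by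
    rw [kaczmarzStep]; abel
  have hc : ‖((1 - b / ‖⟪a, z⟫_ℂ‖ : ℝ) : ℂ) * ⟪a, z⟫_ℂ‖ ^ 2 ≤ (‖⟪a, z⟫_ℂ‖ - b) ^ 2 := by
    rw [← sq_abs (‖⟪a, z⟫_ℂ‖ - b)]
    gcongr
    exact norm_ofReal_one_sub_div_norm_mul_le _ b
  rw [hstep, norm_sub_sq (𝕜 := ℂ), re_inner_smul_ofReal_mul_inner, norm_smul, ha, mul_one]
  linarith

lemma sq_phaseDist_kaczmarzStep_le (x a z : E) (ha : ‖a‖ = 1) (b φ : ℝ) :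
    phaseDist x (kaczmarzStep a b z) ^ 2
      ≤ ‖z - Complex.exp (φ * Complex.I) • x‖ ^ 2
        - 2 * ((1 - b / ‖⟪a, z⟫_ℂ‖) * (⟪a, z - Complex.exp (φ * Complex.I) • x⟫_ℂ * ⟪z, a⟫_ℂ).re)
        + (‖⟪a, z⟫_ℂ‖ - b) ^ 2 :=
  (pow_le_pow_left₀ (phaseDist_nonneg _ _) (phaseDist_le x _ φ) 2).trans
    (norm_sub_kaczmarzStep_sq_le a z _ ha b)

end Kaczmarz

theorem stmt_19_general (n m : ℕ) (x : EuclideanSpace ℂ (Fin n))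
    (a : Fin m → EuclideanSpace ℂ (Fin n)) (ha : ∀ j, ‖a j‖ = 1)
    (γ ε : ℝ)
    -- Restricted strong convexity RSC(γ, ε): for every z in the ε‖x‖-neighborhood and
    -- every optimal phase φ, the one-sided directional derivative of f at z in the
    -- direction z - e^{iφ}x dominates γ‖z - e^{iφ}x‖² + f(z).
    (hRSC : ∀ z : EuclideanSpace ℂ (Fin n),
      (⨅ φ : ℝ, ‖z - Complex.exp (φ * Complex.I) • x‖) ≤ ε * ‖x‖ →
      ∀ φ : ℝ, ‖z - Complex.exp (φ * Complex.I) • x‖ =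
          (⨅ ψ : ℝ, ‖z - Complex.exp (ψ * Complex.I) • x‖) →
        (2/(m:ℝ)) * ∑ j, (1 - ‖(inner ℂ (a j) x : ℂ)‖/‖(inner ℂ (a j) z : ℂ)‖) *
            ((inner ℂ (a j) (z - Complex.exp (φ * Complex.I) • x) : ℂ) *
              (inner ℂ z (a j) : ℂ)).re
          ≥ γ * ‖z - Complex.exp (φ * Complex.I) • x‖^2 +
            (1/(m:ℝ)) * ∑ j, (‖(inner ℂ (a j) z : ℂ)‖ - ‖(inner ℂ (a j) x : ℂ)‖)^2)
    (zk : EuclideanSpace ℂ (Fin n))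
    (hzk : (⨅ φ : ℝ, ‖zk - Complex.exp (φ * Complex.I) • x‖) ≤ ε * ‖x‖) :
    -- expected squared distance after one randomized Kaczmarz step (i uniform on {1,…,m})
    (1/(m:ℝ)) * ∑ i : Fin m,
        (⨅ φ : ℝ, ‖(zk - (((1 - ‖(inner ℂ (a i) x : ℂ)‖/‖(inner ℂ (a i) zk : ℂ)‖ : ℝ) : ℂ) *
            (inner ℂ (a i) zk : ℂ)) • a i) - Complex.exp (φ * Complex.I) • x‖)^2
      ≤ (1 - γ) * (⨅ φ : ℝ, ‖zk - Complex.exp (φ * Complex.I) • x‖)^2 := by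
  obtain ⟨φ₀, hφ₀⟩ := exists_norm_sub_exp_smul_eq_phaseDist x zk
  have hconvex := hRSC zk hzk φ₀ hφ₀
  set h := zk - Complex.exp (φ₀ * Complex.I) • x
  -- `m / m` rather than `1`, so that the degenerate case `m = 0` (where `1 / m = 0`) needs no split
  have hm : (m : ℝ) / m ≤ 1 := div_self_le_one _
  change _ ≤ (1 - γ) * phaseDist x zk ^ 2
  rw [← hφ₀]
  calc _ ≤ (1 / (m : ℝ)) * ∑ i : Fin m, (‖h‖ ^ 2
          - 2 * ((1 - ‖⟪a i, x⟫_ℂ‖ / ‖⟪a i, zk⟫_ℂ‖) * (⟪a i, h⟫_ℂ * ⟪zk, a i⟫_ℂ).re)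
          + (‖⟪a i, zk⟫_ℂ‖ - ‖⟪a i, x⟫_ℂ‖) ^ 2) := by
        gcongr with i
        exact sq_phaseDist_kaczmarzStep_le x (a i) zk (ha i) _ φ₀
    _ = (m / m : ℝ) * ‖h‖ ^ 2
          - (2 / m : ℝ) * ∑ i, (1 - ‖⟪a i, x⟫_ℂ‖ / ‖⟪a i, zk⟫_ℂ‖) * (⟪a i, h⟫_ℂ * ⟪zk, a i⟫_ℂ).re
          + (1 / m : ℝ) * ∑ i, (‖⟪a i, zk⟫_ℂ‖ - ‖⟪a i, x⟫_ℂ‖) ^ 2 := by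
        rw [Finset.sum_add_distrib, Finset.sum_sub_distrib, Finset.sum_const, Finset.card_univ,
          Fintype.card_fin, nsmul_eq_mul, ← Finset.mul_sum]
        ring
    _ ≤ (1 - γ) * ‖h‖ ^ 2 := by nlinarith [sq_nonneg ‖h‖]

theorem stmt_19 (n m : ℕ) (x : EuclideanSpace ℂ (Fin n))
    (a : Fin m → EuclideanSpace ℂ (Fin n)) (ha : ∀ j, ‖a j‖ = 1)
    (γ ε : ℝ) (hγ : 0 < γ) (hε : 0 < ε)
    -- Restricted strong convexity RSC(γ, ε): for every z in the ε‖x‖-neighborhood and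
    -- every optimal phase φ, the one-sided directional derivative of f at z in the
    -- direction z - e^{iφ}x dominates γ‖z - e^{iφ}x‖² + f(z).
    (hRSC : ∀ z : EuclideanSpace ℂ (Fin n),
      (⨅ φ : ℝ, ‖z - Complex.exp (φ * Complex.I) • x‖) ≤ ε * ‖x‖ →
      ∀ φ : ℝ, ‖z - Complex.exp (φ * Complex.I) • x‖ =
          (⨅ ψ : ℝ, ‖z - Complex.exp (ψ * Complex.I) • x‖) →
        (2/(m:ℝ)) * ∑ j, (1 - ‖(inner ℂ (a j) x : ℂ)‖/‖(inner ℂ (a j) z : ℂ)‖) *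
            ((inner ℂ (a j) (z - Complex.exp (φ * Complex.I) • x) : ℂ) *
              (inner ℂ z (a j) : ℂ)).re
          ≥ γ * ‖z - Complex.exp (φ * Complex.I) • x‖^2 +
            (1/(m:ℝ)) * ∑ j, (‖(inner ℂ (a j) z : ℂ)‖ - ‖(inner ℂ (a j) x : ℂ)‖)^2)
    (zk : EuclideanSpace ℂ (Fin n))
    (hzk : (⨅ φ : ℝ, ‖zk - Complex.exp (φ * Complex.I) • x‖) ≤ ε * ‖x‖) :
    -- expected squared distance after one randomized Kaczmarz step (i uniform on {1,…,m})
    (1/(m:ℝ)) * ∑ i : Fin m,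
        (⨅ φ : ℝ, ‖(zk - (((1 - ‖(inner ℂ (a i) x : ℂ)‖/‖(inner ℂ (a i) zk : ℂ)‖ : ℝ) : ℂ) *
            (inner ℂ (a i) zk : ℂ)) • a i) - Complex.exp (φ * Complex.I) • x‖)^2
      ≤ (1 - γ) * (⨅ φ : ℝ, ‖zk - Complex.exp (φ * Complex.I) • x‖)^2 :=
  stmt_19_general n m x a ha γ ε hRSC zk hzk
end
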